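/- arXiv:2604.08215 — 8 statements merged into one kernel-verified Lean document; each statement's English description precedes it below -/
import Mathlib

section
/- Let α ∈ (0, 1/2) and set c₂ = 1/(2(1-α)²). Then for all real u, v with α ≤ u ≤ 1-α and α ≤ v ≤ 1-α, we have log(u/v) ≤ (u-v)/v - c₂·(u-v)². -/
/-! `log` is strongly concave on `(0, c]` with modulus `1 / c ^ 2`, since `log'' x = -1 / x ^ 2`,
so it lies below its tangent line at `v` by at least `(u - v) ^ 2 / (2 * c ^ 2)`: the difference
has derivative of the sign of `v - x`, hence is maximal (and zero) at `v`. -/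

open Real Set

theorem log_sub_log_le_sub_div_sub_sq_div {c u v : ℝ} (hu : 0 < u) (hv : 0 < v) (huc : u ≤ c)
    (hvc : v ≤ c) :
    log u - log v ≤ (u - v) / v - (u - v) ^ 2 / (2 * c ^ 2) := by
  set g : ℝ → ℝ := fun x ↦ log x - (x - v) / v + (x - v) ^ 2 / (2 * c ^ 2)
  have hc : 0 < c := hv.trans_le hvc
  have hg : ∀ x, 0 < x → HasDerivAt g ((v - x) * ((x * v)⁻¹ - (c ^ 2)⁻¹)) x := by
    intro x hx
    refine (((hasDerivAt_log hx.ne').sub (((hasDerivAt_id' x).sub_const v).div_const v)).add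
      ((((hasDerivAt_id' x).sub_const v).pow 2).div_const (2 * c ^ 2))).congr_deriv ?_
    field_simp
    ring
  -- on `(0, c]` we have `x * v ≤ c ^ 2`, so `g'` has the sign of `v - x`
  have hsign : ∀ x ∈ Ioc 0 c, 0 ≤ (x * v)⁻¹ - (c ^ 2)⁻¹ := fun x hx ↦
    sub_nonneg.2 <| inv_anti₀ (by have := hx.1; positivity) (by nlinarith [hx.2])
  have hmax : IsMaxOn g (Ioc 0 c) v := by
    refine isMaxOn_Ioc_of_deriv (hg v hv).continuousAt (hg c hc).continuousAt
      (fun x hx ↦ (hg x hx.1).differentiableAt.differentiableWithinAt)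
      (fun x hx ↦ (hg x (hv.trans hx.1)).differentiableAt.differentiableWithinAt) ?_ ?_
    · intro x hx
      rw [(hg x hx.1).deriv]
      exact mul_nonneg (by linarith [hx.2]) (hsign x ⟨hx.1, by linarith [hx.2]⟩)
    · intro x hx
      rw [(hg x (hv.trans hx.1)).deriv]
      exact mul_nonpos_of_nonpos_of_nonneg (by linarith [hx.1])
        (hsign x ⟨hv.trans hx.1, hx.2.le⟩)
  have key : g u ≤ g v := hmax ⟨hu, huc⟩
  norm_num [g] at key
  linarith

theorem log_ratio_bound_general (α : ℝ) (hα0 : 0 < α) (u v : ℝ)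
    (hu1 : α ≤ u) (hu2 : u ≤ 1 - α) (hv1 : α ≤ v) (hv2 : v ≤ 1 - α) :
    Real.log (u / v) ≤ (u - v) / v - (1 / (2 * (1 - α)^2)) * (u - v)^2 := by
  have hu : 0 < u := hα0.trans_le hu1
  have hv : 0 < v := hα0.trans_le hv1
  rw [log_div hu.ne' hv.ne', one_div_mul_eq_div]
  exact log_sub_log_le_sub_div_sub_sq_div hu hv hu2 hv2

theorem log_ratio_bound (α : ℝ) (hα0 : 0 < α) (hα : α < 1/2) (u v : ℝ)
    (hu1 : α ≤ u) (hu2 : u ≤ 1 - α) (hv1 : α ≤ v) (hv2 : v ≤ 1 - α) :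
    Real.log (u / v) ≤ (u - v) / v - (1 / (2 * (1 - α)^2)) * (u - v)^2 :=
  log_ratio_bound_general α hα0 u v hu1 hu2 hv1 hv2
end

section
/- Let z₁, …, z_k be independent random variables each uniform on the interval [α - 1/2, 1/2 - α], where 0 < α < 1/2, and let z̄ denote their mean. Then for any β > 0, E[exp(-β·∑_{i=1}^k (zᵢ - z̄)²)] ≤ k^{1/2}·(π/((1-2α)²β))^{(k-1)/2}. -/
/-!
The joint law of `z` is the normalized Lebesgue measure on the cube `[-a, a]^k`, `a = 1/2 - α`.
With the unit vector `u = (1, …, 1) / √k` the exponent is `-β (‖x‖² - ⟪u, x⟫²)`, and on the cube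
`|⟪u, x⟫| ≤ √k a`. Enlarging the cube to this slab and rotating `u` to a coordinate vector, the
integral splits into the slab width `2 √k a` times a `(k - 1)`-dimensional Gaussian integral
`(π / β)^((k - 1) / 2)`; dividing by the volume `(1 - 2α)^k` of the cube gives the bound.
-/

open MeasureTheory ProbabilityTheory Real Set
open scoped NNReal ENNReal InnerProductSpace

theorem sum_sq_sub_mean {ι : Type*} [Fintype ι] (x : ι → ℝ) :
    ∑ i, (x i - (∑ j, x j) / Fintype.card ι) ^ 2
      = ∑ i, x i ^ 2 - (∑ i, x i) ^ 2 / Fintype.card ι := by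
  rcases isEmpty_or_nonempty ι with hι | hι
  · simp
  have hcard : (Fintype.card ι : ℝ) ≠ 0 := by positivity
  simp only [sub_sq, Finset.sum_add_distrib, Finset.sum_sub_distrib, ← Finset.sum_mul,
    ← Finset.mul_sum, Finset.sum_const, Finset.card_univ, nsmul_eq_mul]
  field_simp
  ring

section Diagonal

variable {ι : Type*} [Fintype ι]

variable (ι) in
noncomputable def diagonalUnit : EuclideanSpace ℝ ι :=
  WithLp.toLp 2 fun _ => (√(Fintype.card ι))⁻¹

theorem norm_diagonalUnit [Nonempty ι] : ‖diagonalUnit ι‖ = 1 := by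
  have hcard : (0 : ℝ) < Fintype.card ι := by exact_mod_cast Fintype.card_pos
  rw [EuclideanSpace.norm_eq]
  simp [diagonalUnit, inv_pow, sq_sqrt hcard.le, hcard.ne']

theorem inner_diagonalUnit (x : EuclideanSpace ℝ ι) :
    ⟪diagonalUnit ι, x⟫_ℝ = (∑ i, x i) / √(Fintype.card ι) := by
  simp [diagonalUnit, PiLp.inner_apply, Finset.sum_mul, div_eq_mul_inv]

theorem sum_sq_sub_mean_eq_norm_sq_sub_inner_sq (x : EuclideanSpace ℝ ι) :
    ∑ i, (x i - (∑ j, x j) / Fintype.card ι) ^ 2 = ‖x‖ ^ 2 - ⟪diagonalUnit ι, x⟫_ℝ ^ 2 := by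
  rw [sum_sq_sub_mean, inner_diagonalUnit, EuclideanSpace.norm_sq_eq, div_pow,
    sq_sqrt (Nat.cast_nonneg _)]
  simp

theorem inner_diagonalUnit_mem_Icc {a : ℝ} (ha : 0 ≤ a) {x : EuclideanSpace ℝ ι}
    (hx : ∀ i, x i ∈ Icc (-a) a) :
    ⟪diagonalUnit ι, x⟫_ℝ ∈ Icc (-(√(Fintype.card ι) * a)) (√(Fintype.card ι) * a) := by
  have hsum : |∑ i, x i| ≤ √(Fintype.card ι) * √(Fintype.card ι) * a := by
    rw [mul_self_sqrt (Nat.cast_nonneg _)]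
    calc |∑ i, x i| ≤ ∑ i, |x i| := Finset.abs_sum_le_sum_abs _ _
      _ ≤ ∑ _i : ι, a := Finset.sum_le_sum fun i _ => abs_le.mpr (hx i)
      _ = Fintype.card ι * a := by simp
  rw [inner_diagonalUnit, mem_Icc, ← abs_le, abs_div, abs_of_nonneg (sqrt_nonneg _)]
  exact div_le_of_le_mul₀ (sqrt_nonneg _) (by positivity) (by linarith)

end Diagonal

theorem lintegral_exp_neg_mul_sum_sq {ι : Type*} [Fintype ι] {β : ℝ} (hβ : 0 < β) :
    ∫⁻ w : ι → ℝ, ENNReal.ofReal (exp (-β * ∑ i, w i ^ 2))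
      = ENNReal.ofReal (√(π / β) ^ Fintype.card ι) := by
  have hprod (w : ι → ℝ) : exp (-β * ∑ i, w i ^ 2) = ∏ i, exp (-β * w i ^ 2) := by
    rw [Finset.mul_sum, exp_sum]
  simp_rw [hprod]
  rw [← ofReal_integral_eq_lintegral_ofReal (μ := volume)
      (Integrable.fintype_prod fun _ => integrable_exp_neg_mul_sq hβ)
      (ae_of_all _ fun w => by positivity),
    integral_fintype_prod_volume_eq_prod (fun _ t => exp (-β * t ^ 2)), integral_gaussian,
    Finset.prod_const, Finset.card_univ]

theorem lintegral_comp_apply_zero_mul_gaussian {n : ℕ} {β : ℝ} (hβ : 0 < β) {g : ℝ → ℝ≥0∞}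
    (hg : Measurable g) :
    ∫⁻ y : EuclideanSpace ℝ (Fin (n + 1)), g (y 0) * ENNReal.ofReal (exp (-β * (‖y‖ ^ 2 - y 0 ^ 2)))
      = (∫⁻ t, g t) * ENNReal.ofReal (√(π / β) ^ n) := by
  rw [← (PiLp.volume_preserving_toLp (Fin (n + 1))).lintegral_comp_emb
      (MeasurableEquiv.toLp 2 _).measurableEmbedding,
    ← (volume_preserving_piFinSuccAbove (fun _ => ℝ) 0).symm.lintegral_comp_emb
      (MeasurableEquiv.measurableEmbedding _)]
  calc _ = ∫⁻ p : ℝ × (Fin n → ℝ), g p.1 * ENNReal.ofReal (exp (-β * ∑ j, p.2 j ^ 2)) :=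
        lintegral_congr fun p => by simp [EuclideanSpace.norm_sq_eq, Fin.sum_univ_succ]
    _ = _ := by
      rw [Measure.volume_eq_prod, lintegral_prod_mul (f := g)
        (g := fun w : Fin n → ℝ => ENNReal.ofReal (exp (-β * ∑ j, w j ^ 2)))
        hg.aemeasurable (by fun_prop : Measurable _).aemeasurable, lintegral_exp_neg_mul_sum_sq hβ,
        Fintype.card_fin]

theorem lintegral_comp_inner_norm_eq_euclidean {E ι : Type*} [NormedAddCommGroup E]
    [InnerProductSpace ℝ E] [FiniteDimensional ℝ E] [MeasurableSpace E] [BorelSpace E] [Fintype ι]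
    (hE : Module.finrank ℝ E = Fintype.card ι) {u : E} (hu : ‖u‖ = 1) (i : ι)
    (F : ℝ → ℝ → ℝ≥0∞) :
    ∫⁻ x, F ⟪u, x⟫_ℝ ‖x‖ = ∫⁻ y : EuclideanSpace ℝ ι, F (y i) ‖y‖ := by
  obtain ⟨b, hb⟩ := Orthonormal.exists_orthonormalBasis_extension_of_card_eq (s := {i})
    (v := fun _ => u) hE (orthonormal_subsingleton_iff.mpr fun _ => hu)
  rw [← b.measurePreserving_repr.lintegral_comp_emb b.repr.toHomeomorph.measurableEmbedding]
  simp [b.repr_apply_apply, hb i rfl]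

theorem lintegral_comp_inner_mul_gaussian {E : Type*} [NormedAddCommGroup E] [InnerProductSpace ℝ E]
    [FiniteDimensional ℝ E] [MeasurableSpace E] [BorelSpace E] {n : ℕ}
    (hE : Module.finrank ℝ E = n + 1) {u : E} (hu : ‖u‖ = 1) {β : ℝ} (hβ : 0 < β)
    {g : ℝ → ℝ≥0∞} (hg : Measurable g) :
    ∫⁻ x, g ⟪u, x⟫_ℝ * ENNReal.ofReal (exp (-β * (‖x‖ ^ 2 - ⟪u, x⟫_ℝ ^ 2)))
      = (∫⁻ t, g t) * ENNReal.ofReal (√(π / β) ^ n) := by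
  rw [lintegral_comp_inner_norm_eq_euclidean
    (F := fun t r => g t * ENNReal.ofReal (exp (-β * (r ^ 2 - t ^ 2))))
    (hE.trans (Fintype.card_fin _).symm) hu 0]
  exact lintegral_comp_apply_zero_mul_gaussian hβ hg

theorem setLIntegral_cube_exp_neg_sum_sq_sub_mean_le {n : ℕ} {a β : ℝ} (ha : 0 ≤ a)
    (hβ : 0 < β) :
    ∫⁻ x in univ.pi fun _ : Fin (n + 1) => Icc (-a) a,
        ENNReal.ofReal (exp (-β * ∑ i, (x i - (∑ j, x j) / (n + 1 : ℕ)) ^ 2))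
      ≤ ENNReal.ofReal (2 * (√(n + 1 : ℕ) * a)) * ENNReal.ofReal (√(π / β) ^ n) := by
  set u := diagonalUnit (Fin (n + 1))
  set c := √(n + 1 : ℕ) * a
  set g : EuclideanSpace ℝ (Fin (n + 1)) → ℝ≥0∞ := fun v =>
    (Icc (-c) c).indicator 1 ⟪u, v⟫_ℝ * ENNReal.ofReal (exp (-β * (‖v‖ ^ 2 - ⟪u, v⟫_ℝ ^ 2)))
  have hcube : ∀ x ∈ univ.pi fun _ : Fin (n + 1) => Icc (-a) a,
      ENNReal.ofReal (exp (-β * ∑ i, (x i - (∑ j, x j) / (n + 1 : ℕ)) ^ 2))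
        = g (WithLp.toLp 2 x) := by
    intro x hx
    have hu := inner_diagonalUnit_mem_Icc ha (x := WithLp.toLp 2 x) fun i => hx i trivial
    rw [Fintype.card_fin] at hu
    simp only [g, u, c, ← sum_sq_sub_mean_eq_norm_sq_sub_inner_sq, Fintype.card_fin]
    rw [indicator_of_mem hu, Pi.one_apply, one_mul]
  calc _ = ∫⁻ x in univ.pi fun _ : Fin (n + 1) => Icc (-a) a, g (WithLp.toLp 2 x) :=
        setLIntegral_congr_fun (MeasurableSet.univ_pi fun _ => measurableSet_Icc) hcube
    _ ≤ ∫⁻ x, g (WithLp.toLp 2 x) := setLIntegral_le_lintegral _ _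
    _ = ∫⁻ v, g v := (PiLp.volume_preserving_toLp _).lintegral_comp_emb
        (MeasurableEquiv.toLp 2 _).measurableEmbedding _
    _ = volume (Icc (-c) c) * ENNReal.ofReal (√(π / β) ^ n) := by
        rw [lintegral_comp_inner_mul_gaussian finrank_euclideanSpace_fin norm_diagonalUnit hβ
          (measurable_one.indicator measurableSet_Icc), lintegral_indicator_one measurableSet_Icc]
    _ = _ := by rw [volume_Icc]; ring_nf

theorem MeasureTheory.Measure.pi_smul_of_ne_top {ι : Type*} [Fintype ι] {α : ι → Type*}
    [∀ i, MeasurableSpace (α i)] (μ : ∀ i, Measure (α i)) [∀ i, SigmaFinite (μ i)]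
    {c : ι → ℝ≥0∞} (hc : ∀ i, c i ≠ ∞) :
    Measure.pi (fun i => c i • μ i) = (∏ i, c i) • Measure.pi μ := by
  lift c to ι → ℝ≥0 using hc
  simp_rw [← ENNReal.smul_def]
  exact Measure.pi_eq fun s hs => by simp [Measure.pi_pi, Finset.prod_mul_distrib]

theorem map_eq_smul_restrict_pi_of_iIndepFun {ι Ω : Type*} [Fintype ι] [MeasureSpace Ω]
    [IsProbabilityMeasure (ℙ : Measure Ω)] {z : ι → Ω → ℝ} (hmeas : ∀ i, Measurable (z i))
    (hindep : iIndepFun z ℙ) {c : ℝ≥0∞} (hc : c ≠ ∞) {s : Set ℝ}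
    (hlaw : ∀ i, Measure.map (z i) ℙ = c • volume.restrict s) :
    Measure.map (fun ω i => z i ω) ℙ
      = c ^ Fintype.card ι • volume.restrict (univ.pi fun _ : ι => s) := by
  rw [hindep.map_fun_eq_pi_map fun i => (hmeas i).aemeasurable, funext hlaw,
    Measure.pi_smul_of_ne_top _ fun _ => hc, volume_pi, Measure.restrict_pi_pi]
  simp

theorem expectation_exp_neg_beta_var_general (k : ℕ) (hk : 1 ≤ k) (α β : ℝ)
    (hα : α < 1/2) (hβ : 0 < β)
    (Ω : Type*) [MeasureSpace Ω] [IsProbabilityMeasure (ℙ : Measure Ω)]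
    (z : Fin k → Ω → ℝ) (hmeas : ∀ i, Measurable (z i))
    (hindep : iIndepFun z ℙ)
    (hunif : ∀ i, Measure.map (z i) ℙ =
      (ENNReal.ofReal (1 - 2*α))⁻¹ • volume.restrict (Set.Icc (α - 1/2) (1/2 - α))) :
    ∫ ω, Real.exp (-β * ∑ i, (z i ω - (∑ j, z j ω) / k)^2)
      ≤ (k : ℝ) ^ ((1:ℝ)/2) * (Real.pi / ((1 - 2*α)^2 * β)) ^ (((k:ℝ) - 1)/2) := by
  obtain ⟨n, rfl⟩ : ∃ n, k = n + 1 := ⟨k - 1, by omega⟩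
  have hc : 0 < 1 - 2 * α := by linarith
  rw [show α - 1/2 = -(1/2 - α) by ring] at hunif
  have hlaw := map_eq_smul_restrict_pi_of_iIndepFun hmeas hindep
    (ENNReal.inv_ne_top.mpr (ENNReal.ofReal_pos.mpr hc).ne') hunif
  have hf : Continuous fun x : Fin (n + 1) → ℝ =>
      exp (-β * ∑ i, (x i - (∑ j, x j) / (n + 1 : ℕ)) ^ 2) := by fun_prop
  rw [← integral_map (measurable_pi_lambda _ hmeas).aemeasurable hf.aestronglyMeasurable, hlaw,
    integral_smul_measure, integral_eq_lintegral_of_nonneg_ae (ae_of_all _ fun _ => by positivity)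
      hf.aestronglyMeasurable.restrict, smul_eq_mul]
  calc _ ≤ ((ENNReal.ofReal (1 - 2 * α))⁻¹ ^ Fintype.card (Fin (n + 1))).toReal *
        (ENNReal.ofReal (2 * (√(n + 1 : ℕ) * (1 / 2 - α))) *
          ENNReal.ofReal (√(π / β) ^ n)).toReal :=
        mul_le_mul_of_nonneg_left (ENNReal.toReal_mono (by finiteness)
          (setLIntegral_cube_exp_neg_sum_sq_sub_mean_le (by linarith) hβ)) ENNReal.toReal_nonneg
    _ = _ := by
      have hexp : (((n + 1 : ℕ) : ℝ) - 1) / 2 = (n : ℝ) / 2 := by push_cast; ring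
      have hsqrt : √(π / ((1 - 2 * α) ^ 2 * β)) = √(π / β) / (1 - 2 * α) := by
        rw [mul_comm, ← div_div, sqrt_div' _ (sq_nonneg _), sqrt_sq hc.le]
      rw [← sqrt_eq_rpow, hexp, rpow_div_two_eq_sqrt _ (by positivity), rpow_natCast, hsqrt,
        Fintype.card_fin, ENNReal.toReal_pow, ENNReal.toReal_inv, ENNReal.toReal_mul,
        ENNReal.toReal_ofReal hc.le, ENNReal.toReal_ofReal (by positivity),
        ENNReal.toReal_ofReal (by positivity)]
      rw [show 2 * (√(n + 1 : ℕ) * (1 / 2 - α)) = √(n + 1 : ℕ) * (1 - 2 * α) by ring, div_pow,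
        inv_pow, pow_succ]
      field_simp

theorem expectation_exp_neg_beta_var (k : ℕ) (hk : 1 ≤ k) (α β : ℝ)
    (hα0 : 0 < α) (hα : α < 1/2) (hβ : 0 < β)
    (Ω : Type*) [MeasureSpace Ω] [IsProbabilityMeasure (ℙ : Measure Ω)]
    (z : Fin k → Ω → ℝ) (hmeas : ∀ i, Measurable (z i))
    (hindep : iIndepFun z ℙ)
    (hunif : ∀ i, Measure.map (z i) ℙ =
      (ENNReal.ofReal (1 - 2*α))⁻¹ • volume.restrict (Set.Icc (α - 1/2) (1/2 - α))) :
    ∫ ω, Real.exp (-β * ∑ i, (z i ω - (∑ j, z j ω) / k)^2)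
      ≤ (k : ℝ) ^ ((1:ℝ)/2) * (Real.pi / ((1 - 2*α)^2 * β)) ^ (((k:ℝ) - 1)/2) :=
  expectation_exp_neg_beta_var_general k hk α β hα hβ Ω z hmeas hindep hunif
end

section
/- Let p be a prime. The disjoint union of p-1 cliques, each of order p-1, has no induced regular subgraph of order exactly p. Consequently N_=(p) ≥ (p-1)² + 1. -/
/-!
A regular induced subgraph of degree `d` of a disjoint union of cliques meets each clique in
either no vertex or exactly `d + 1` vertices, so its order is `j * (d + 1)` where `j` is the
number of cliques it meets. With `p - 1` cliques of order `p - 1` both factors are smaller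
than `p`, so the order is never the prime `p`.

Any graph on at most `(p - 1)²` vertices is an induced subgraph of this one, and induced
embeddings carry regular induced subgraphs along, so `N_=(p) > (p - 1)²`. The infimum defining
`N_=(p)` is over a nonempty set: by the Erdős–Szekeres bound every graph on `4 ^ p` vertices
has a clique or an independent set of order `p`, and both are regular.
-/

/-- The induced subgraph of `G` on `s` is regular: all vertices of `s` have the same
number of neighbours within `s`. -/
def RegOn {V : Type*} (G : SimpleGraph V) (s : Set V) : Prop :=
  ∃ d : ℕ, ∀ v ∈ s, (s ∩ {w | G.Adj v w}).ncard = d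

/-- `G` has a regular induced subgraph of order exactly `k`. -/
def HasRegEq {V : Type*} (G : SimpleGraph V) (k : ℕ) : Prop :=
  ∃ s : Set V, s.ncard = k ∧ RegOn G s

/-- `G` has a regular induced subgraph of order at least `k`. -/
def HasRegGe {V : Type*} (G : SimpleGraph V) (k : ℕ) : Prop :=
  ∃ s : Set V, k ≤ s.ncard ∧ RegOn G s

/-- The least `n` such that every graph on `n` vertices has a regular induced subgraph
of order exactly `k`. -/
noncomputable def Neq (k : ℕ) : ℕ :=
  sInf {n | ∀ G : SimpleGraph (Fin n), HasRegEq G k}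

/-- The least `n` such that every graph on `n` vertices has a regular induced subgraph
of order at least `k`. -/
noncomputable def Nge (k : ℕ) : ℕ :=
  sInf {n | ∀ G : SimpleGraph (Fin n), HasRegGe G k}

open Finset

/-- The disjoint union of `|α|` cliques of order `|β|`, one on each fibre `{a} × β`. -/
def cliqueUnion (α β : Type*) : SimpleGraph (α × β) :=
  SimpleGraph.fromRel fun a b => a.1 = b.1

section cliqueUnion

variable {α β : Type*}

@[simp]
theorem cliqueUnion_adj {a b : α × β} :
    (cliqueUnion α β).Adj a b ↔ a ≠ b ∧ a.1 = b.1 := by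
  simp only [cliqueUnion, SimpleGraph.fromRel_adj, or_self_iff, eq_comm (a := b.1)]

theorem ncard_inter_adj_cliqueUnion_add_one {s : Set (α × β)} (hs : s.Finite) {v : α × β}
    (hv : v ∈ s) :
    (s ∩ {w | (cliqueUnion α β).Adj v w}).ncard + 1 = {w ∈ s | w.1 = v.1}.ncard := by
  have hnbr : s ∩ {w | (cliqueUnion α β).Adj v w} = {w ∈ s | w.1 = v.1} \ {v} := by
    ext w
    simp only [Set.mem_inter_iff, Set.mem_sdiff, Set.mem_ofPred_eq, cliqueUnion_adj,
      Set.mem_singleton_iff]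
    grind
  rw [hnbr]
  exact Set.ncard_sdiff_singleton_add_one (show v ∈ {w ∈ s | w.1 = v.1} from ⟨hv, rfl⟩)
    (hs.subset fun _ h => h.1)

theorem RegOn.exists_ncard_eq_mul_cliqueUnion [Fintype α] [Fintype β] {s : Set (α × β)}
    (hs : RegOn (cliqueUnion α β) s) :
    ∃ j c, s.ncard = j * c ∧ j ≤ Fintype.card α ∧ c ≤ Fintype.card β := by
  classical
  obtain ⟨d, hd⟩ := hs
  rcases s.eq_empty_or_nonempty with rfl | ⟨v, hv⟩
  · exact ⟨0, 0, by simp, Nat.zero_le _, Nat.zero_le _⟩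
  have hfiber {w} (hw : w ∈ s) : {u ∈ s | u.1 = w.1}.ncard = d + 1 := by
    rw [← ncard_inter_adj_cliqueUnion_add_one s.toFinite hw, hd w hw]
  set S := s.toFinset
  have hfiber' : ∀ a ∈ S.image Prod.fst, #{w ∈ S | w.1 = a} = d + 1 := by
    intro a ha
    obtain ⟨w, hw, rfl⟩ := mem_image.mp ha
    rw [← hfiber (Set.mem_toFinset.mp hw), ← Set.ncard_coe_finset]
    simp [S]
  refine ⟨#(S.image Prod.fst), d + 1, ?_, card_le_univ _, ?_⟩
  · rw [Set.ncard_eq_toFinset_card', card_eq_sum_card_image Prod.fst, sum_congr rfl hfiber',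
      sum_const, smul_eq_mul]
  · rw [← hfiber hv, ← Nat.card_eq_fintype_card, ← Set.ncard_univ β]
    exact Set.ncard_le_ncard_of_injOn Prod.snd (fun _ _ => trivial)
      (fun a ha b hb hab => Prod.ext (ha.2.trans hb.2.symm) hab)

theorem not_hasRegEq_cliqueUnion_of_prime [Fintype α] [Fintype β] {p : ℕ} (hp : p.Prime)
    (hα : Fintype.card α < p) (hβ : Fintype.card β < p) :
    ¬ HasRegEq (cliqueUnion α β) p := by
  rintro ⟨s, hsp, hs⟩
  obtain ⟨j, c, hjc, hj, hc⟩ := hs.exists_ncard_eq_mul_cliqueUnion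
  rw [hsp] at hjc
  rcases Nat.prime_mul_iff.mp (hjc ▸ hp) with ⟨-, rfl⟩ | ⟨-, rfl⟩
  all_goals omega

end cliqueUnion

variable {V W : Type*}

theorem RegOn.map {G : SimpleGraph V} {H : SimpleGraph W} (f : G ↪g H) {s : Set V}
    (hs : RegOn G s) : RegOn H (f '' s) := by
  obtain ⟨d, hd⟩ := hs
  refine ⟨d, ?_⟩
  rintro _ ⟨v, hv, rfl⟩
  have himage : f '' s ∩ {w | H.Adj (f v) w} = f '' (s ∩ {w | G.Adj v w}) := by
    ext w
    constructor
    · rintro ⟨⟨u, hu, rfl⟩, hadj⟩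
      exact ⟨u, ⟨hu, f.map_adj_iff.mp hadj⟩, rfl⟩
    · rintro ⟨u, ⟨hu, hadj⟩, rfl⟩
      exact ⟨⟨u, hu, rfl⟩, f.map_adj_iff.mpr hadj⟩
  rw [himage, Set.ncard_image_of_injective _ f.injective, hd v hv]

theorem HasRegEq.map {G : SimpleGraph V} {H : SimpleGraph W} (f : G ↪g H) {k : ℕ}
    (h : HasRegEq G k) : HasRegEq H k := by
  obtain ⟨s, hsk, hs⟩ := h
  exact ⟨f '' s, by rw [Set.ncard_image_of_injective _ f.injective, hsk], hs.map f⟩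

theorem SimpleGraph.IsNClique.hasRegEq {G : SimpleGraph V} {k : ℕ} {s : Finset V}
    (hs : G.IsNClique k s) : HasRegEq G k := by
  classical
  refine ⟨s, by rw [Set.ncard_coe_finset, hs.card_eq], k - 1, fun v hv => ?_⟩
  have hnbr : (s : Set V) ∩ {w | G.Adj v w} = ↑(s.erase v) := by
    ext w
    simp only [Set.mem_inter_iff, mem_coe, Set.mem_ofPred_eq, coe_erase]
    exact ⟨fun ⟨hw, hadj⟩ => ⟨hw, hadj.ne'⟩,
      fun ⟨hw, hne⟩ => ⟨hw, hs.isClique hv hw (Ne.symm hne)⟩⟩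
  rw [hnbr, Set.ncard_coe_finset, card_erase_of_mem hv, hs.card_eq]

theorem SimpleGraph.IsNIndepSet.hasRegEq {G : SimpleGraph V} {k : ℕ} {s : Finset V}
    (hs : G.IsNIndepSet k s) : HasRegEq G k := by
  refine ⟨s, by rw [Set.ncard_coe_finset, hs.card_eq], 0, fun v hv => ?_⟩
  rw [Set.ncard_eq_zero, Set.eq_empty_iff_forall_notMem]
  exact fun w ⟨hw, hadj⟩ => hs.isIndepSet hv hw hadj.ne hadj

theorem exists_isNClique_or_isNIndepSet [DecidableEq V] (G : SimpleGraph V)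
    [DecidableRel G.Adj] :
    ∀ (a b : ℕ) (S : Finset V), 2 ^ (a + b) ≤ #S →
      (∃ T ⊆ S, G.IsNClique a T) ∨ (∃ T ⊆ S, G.IsNIndepSet b T)
  | 0, _, _, _ => .inl ⟨∅, empty_subset _, by simp⟩
  | _ + 1, 0, _, _ => .inr ⟨∅, empty_subset _, by simp [← SimpleGraph.isNClique_compl]⟩
  | a + 1, b + 1, S, hS => by
    obtain ⟨v, hv⟩ : S.Nonempty := card_pos.mp (lt_of_lt_of_le (by positivity) hS)
    set N := {w ∈ S.erase v | G.Adj v w}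
    set M := {w ∈ S.erase v | ¬ G.Adj v w}
    have hNS : N ⊆ S := (filter_subset _ _).trans (erase_subset _ _)
    have hMS : M ⊆ S := (filter_subset _ _).trans (erase_subset _ _)
    have hNM : #N + #M + 1 = #S := by
      rw [card_filter_add_card_filter_not, card_erase_add_one hv]
    have hpow : 2 ^ (a + 1 + (b + 1)) = 2 ^ (a + b + 1) + 2 ^ (a + b + 1) := by ring
    -- `N` and `M` split `S \ {v}`, so one of them has at least half of its elements.
    obtain hN | hM : 2 ^ (a + (b + 1)) ≤ #N ∨ 2 ^ (a + 1 + b) ≤ #M := by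
      rw [show a + (b + 1) = a + b + 1 by ring, show a + 1 + b = a + b + 1 by ring]
      omega
    · rcases exists_isNClique_or_isNIndepSet G a (b + 1) N hN with
        ⟨T, hTN, hT⟩ | ⟨T, hTN, hT⟩
      · refine .inl ⟨insert v T, insert_subset hv (hTN.trans hNS), hT.insert fun w hw => ?_⟩
        exact (mem_filter.mp (hTN hw)).2
      · exact .inr ⟨T, hTN.trans hNS, hT⟩
    · rcases exists_isNClique_or_isNIndepSet G (a + 1) b M hM with
        ⟨T, hTM, hT⟩ | ⟨T, hTM, hT⟩
      · exact .inl ⟨T, hTM.trans hMS, hT⟩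
      · refine .inr ⟨insert v T, insert_subset hv (hTM.trans hMS), ?_⟩
        rw [← SimpleGraph.isNClique_compl] at hT ⊢
        refine hT.insert fun w hw => ?_
        have hwM := mem_filter.mp (hTM hw)
        exact (G.compl_adj v w).mpr ⟨(ne_of_mem_erase hwM.1).symm, hwM.2⟩
termination_by a b => a + b

theorem hasRegEq_of_pow_le_card [Fintype V] (G : SimpleGraph V) {k : ℕ}
    (hV : 2 ^ (k + k) ≤ Fintype.card V) : HasRegEq G k := by
  classical
  rcases exists_isNClique_or_isNIndepSet G k k univ hV with ⟨T, -, hT⟩ | ⟨T, -, hT⟩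
  exacts [hT.hasRegEq, hT.hasRegEq]

theorem card_lt_neq_of_not_hasRegEq [Fintype V] {G : SimpleGraph V} {k : ℕ}
    (hG : ¬ HasRegEq G k) : Fintype.card V < Neq k := by
  have hne : {n | ∀ H : SimpleGraph (Fin n), HasRegEq H k}.Nonempty :=
    ⟨2 ^ (k + k), fun H => hasRegEq_of_pow_le_card H (Fintype.card_fin _).ge⟩
  refine le_csInf hne fun n hn => Nat.lt_of_not_le fun hnV => hG ?_
  obtain ⟨f⟩ := Function.Embedding.nonempty_of_card_le
    (by simpa using hnV : Fintype.card (Fin n) ≤ Fintype.card V)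
  exact (hn (G.comap f)).map (SimpleGraph.Embedding.comap f G)

theorem cliques_no_reg_prime (p : ℕ) (hp : p.Prime) :
    (¬ HasRegEq (SimpleGraph.fromRel
        (fun (a b : Fin (p-1) × Fin (p-1)) => a.1 = b.1)) p) ∧
    (p - 1)^2 + 1 ≤ Neq p := by
  have hcard : Fintype.card (Fin (p - 1)) < p := by simpa using hp.pos
  have hno : ¬ HasRegEq (cliqueUnion (Fin (p - 1)) (Fin (p - 1))) p :=
    not_hasRegEq_cliqueUnion_of_prime hp hcard hcard
  refine ⟨hno, ?_⟩
  simpa [sq] using card_lt_neq_of_not_hasRegEq hno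
end

section
/- Let r ≥ 4 and s ≥ 1, and let G = C_r[K_s] be the lexicographic product of the cycle C_r with the complete graph K_s. If H is a connected induced d-regular subgraph of G whose vertex set meets every one of the r blocks (copies of K_s), then the block intersection sizes x₀, …, x_{r-1} satisfy xᵢ + x_{i+1} + x_{i+2} = d+1 for all i (indices mod r), hence the sequence (xᵢ) is periodic with period 3 and H has exactly r(d+1)/3 vertices. -/
/-- The lexicographic product of the cycle `C_r` with the complete graph `K_s`:
vertices `(i,a)` and `(j,b)` are adjacent iff `i = j` (and `a ≠ b`) or `i` and `j`
are consecutive modulo `r`. -/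
def lexCycle (r s : ℕ) : SimpleGraph (ZMod r × Fin s) :=
  SimpleGraph.fromRel (fun a b => a.1 = b.1 ∨ a.1 = b.1 + 1)

theorem lexCycle_regular_blocks (r s d : ℕ) (hr : 4 ≤ r) (hs : 1 ≤ s)
    (S : Set (ZMod r × Fin s))
    (hconn : ((lexCycle r s).induce S).Connected)
    (hreg : ∀ v ∈ S, (S ∩ {w | (lexCycle r s).Adj v w}).ncard = d)
    (hmeet : ∀ i : ZMod r, ∃ a : Fin s, ((i, a) : ZMod r × Fin s) ∈ S) :
    (∀ i : ZMod r,
        (S ∩ {v | v.1 = i}).ncard + (S ∩ {v | v.1 = i + 1}).ncard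
          + (S ∩ {v | v.1 = i + 2}).ncard = d + 1) ∧
    (∀ i : ZMod r, (S ∩ {v | v.1 = i}).ncard = (S ∩ {v | v.1 = i + 3}).ncard) ∧
    3 * S.ncard = r * (d + 1) := by
  classical
  haveI : NeZero r := ⟨by omega⟩
  haveI : Fact (1 < r) := ⟨by omega⟩
  have h1 : (1 : ZMod r) ≠ 0 := one_ne_zero
  have h2 : (2 : ZMod r) ≠ 0 := by
    intro h
    rw [show (2 : ZMod r) = ((2 : ℕ) : ZMod r) by norm_cast,
      ZMod.natCast_eq_zero_iff] at h
    have := Nat.le_of_dvd (by norm_num) h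
    omega
  set x : ZMod r → ℕ := fun i => (S ∩ {v | v.1 = i}).ncard with hx
  have key : ∀ i : ZMod r, x (i - 1) + x i + x (i + 1) = d + 1 := by
    intro i
    obtain ⟨a, ha⟩ := hmeet i
    have hd := hreg (i, a) ha
    have hne1 : i - 1 ≠ i := fun h => h1 (sub_eq_self.mp h)
    have hne2 : i + 1 ≠ i := fun h => h1 (by linear_combination h)
    have hne3 : i - 1 ≠ i + 1 := fun h => h2 (by linear_combination -h)
    have hset : insert ((i, a) : ZMod r × Fin s) (S ∩ {w | (lexCycle r s).Adj (i, a) w})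
        = (S ∩ {v | v.1 = i - 1}) ∪ (S ∩ {v | v.1 = i}) ∪ (S ∩ {v | v.1 = i + 1}) := by
      ext w
      simp only [Set.mem_insert_iff, Set.mem_inter_iff, Set.mem_union, Set.mem_setOf_eq,
        lexCycle, SimpleGraph.fromRel_adj]
      constructor
      · rintro (rfl | ⟨hw, hne, (h | h) | (h | h)⟩)
        · exact Or.inl (Or.inr ⟨ha, rfl⟩)
        · exact Or.inl (Or.inr ⟨hw, h.symm⟩)
        · exact Or.inl (Or.inl ⟨hw, eq_sub_of_add_eq h.symm⟩)
        · exact Or.inl (Or.inr ⟨hw, h⟩)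
        · exact Or.inr ⟨hw, h⟩
      · rintro ((⟨hw, h⟩ | ⟨hw, h⟩) | ⟨hw, h⟩)
        · refine Or.inr ⟨hw, ?_, Or.inl (Or.inr (by rw [h]; ring))⟩
          intro he; rw [← he] at h; exact hne1 h.symm
        · by_cases hwa : w = (i, a)
          · exact Or.inl hwa
          · exact Or.inr ⟨hw, fun he => hwa he.symm, Or.inr (Or.inl h)⟩
        · refine Or.inr ⟨hw, ?_, Or.inr (Or.inr h)⟩
          intro he; rw [← he] at h; exact hne2 h.symm
    have hnm : ((i, a) : ZMod r × Fin s) ∉ S ∩ {w | (lexCycle r s).Adj (i, a) w} :=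
      fun h => (lexCycle r s).irrefl h.2
    have disjAB : Disjoint (S ∩ {v : ZMod r × Fin s | v.1 = i - 1})
        (S ∩ {v | v.1 = i}) := by
      rw [Set.disjoint_left]
      rintro v ⟨-, h⟩ ⟨-, h'⟩
      exact hne1 (h.symm.trans h')
    have disjABC : Disjoint ((S ∩ {v : ZMod r × Fin s | v.1 = i - 1}) ∪ (S ∩ {v | v.1 = i}))
        (S ∩ {v | v.1 = i + 1}) := by
      rw [Set.disjoint_left]
      rintro v (⟨-, h⟩ | ⟨-, h⟩) ⟨-, h'⟩
      · exact hne3 (h.symm.trans h')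
      · exact hne2 (h'.symm.trans h)
    show (S ∩ {v | v.1 = i - 1}).ncard + (S ∩ {v | v.1 = i}).ncard
        + (S ∩ {v | v.1 = i + 1}).ncard = d + 1
    rw [← Set.ncard_union_eq disjAB, ← Set.ncard_union_eq disjABC, ← hset,
      Set.ncard_insert_of_notMem hnm, hd]
  have first : ∀ i : ZMod r, x i + x (i + 1) + x (i + 2) = d + 1 := by
    intro i
    have h := key (i + 1)
    rw [add_sub_cancel_right, show i + 1 + 1 = i + 2 by ring] at h
    exact h
  refine ⟨first, ?_, ?_⟩
  · intro i
    have e1 := first i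
    have e2 := first (i + 1)
    rw [show i + 1 + 1 = i + 2 by ring, show i + 1 + 2 = i + 3 by ring] at e2
    show x i = x (i + 3)
    omega
  · -- counting
    have hfin : S.Finite := Set.toFinite S
    set T : Finset (ZMod r × Fin s) := hfin.toFinset with hT
    have hS : S.ncard = T.card := by rw [hT, Set.ncard_eq_toFinset_card S hfin]
    have hXi : ∀ i : ZMod r, x i = (T.filter (fun v => v.1 = i)).card := by
      intro i
      have : S ∩ {v | v.1 = i} = ↑(T.filter (fun v => v.1 = i)) := by
        ext v
        simp only [hT, Finset.coe_filter, Set.Finite.mem_toFinset, Set.mem_inter_iff, Set.mem_setOf_eq]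
      show (S ∩ {v | v.1 = i}).ncard = _
      rw [this, Set.ncard_coe_finset]
    have hsum : T.card = ∑ i : ZMod r, x i := by
      rw [Finset.card_eq_sum_card_fiberwise (f := Prod.fst) (t := Finset.univ)
        (fun v _ => Finset.mem_univ _)]
      exact Finset.sum_congr rfl fun i _ => (hXi i).symm
    have hshift : ∀ c : ZMod r, ∑ i : ZMod r, x (i + c) = ∑ i : ZMod r, x i := by
      intro c
      exact Fintype.sum_equiv (Equiv.addRight c) _ _ (fun i => by simp)
    have : ∑ i : ZMod r, (x i + x (i + 1) + x (i + 2)) = ∑ i : ZMod r, (d + 1) :=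
      Finset.sum_congr rfl fun i _ => first i
    rw [Finset.sum_add_distrib, Finset.sum_add_distrib, hshift 1, hshift 2,
      Finset.sum_const, Finset.card_univ, ZMod.card, smul_eq_mul] at this
    rw [hS, hsum]
    omega
end

section
/- Let r ≥ 4 and s ≥ 1, and let H be a connected induced regular subgraph of the lexicographic product C_r[K_s] with block intersection sizes x₀, …, x_{r-1} (indices mod r). If some block is missed by H, i.e. xᵢ = 0 for some i, then H is a clique (contained in the union of two consecutive blocks). -/
theorem SimpleGraph.Connected.subset_of_adj_mem {V : Type*} {G : SimpleGraph V} {S T : Set V}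
    (hS : (G.induce S).Connected) {u : V} (hu : u ∈ S) (huT : u ∈ T)
    (hT : ∀ v ∈ S, ∀ w ∈ S, v ∈ T → G.Adj v w → w ∈ T) : S ⊆ T := by
  intro w hw
  obtain ⟨p⟩ := hS.preconnected ⟨u, hu⟩ ⟨w, hw⟩
  suffices ∀ {x y : S}, (G.induce S).Walk x y → (x : V) ∈ T → (y : V) ∈ T from this p huT
  intro x y p
  induction p with
  | nil => exact id
  | cons hadj _ ih => exact fun hx => ih (hT _ (Subtype.property _) _ (Subtype.property _) hx hadj)

theorem ZMod.exists_and_not_add_one {r : ℕ} [NeZero r] {P : ZMod r → Prop} {a b : ZMod r}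
    (ha : P a) (hb : ¬P b) : ∃ i, P i ∧ ¬P (i + 1) := by
  by_contra! hstep
  have hall : ∀ n : ℕ, P (a + n) := by
    intro n
    induction n with
    | zero => simpa using ha
    | succ n ih => simpa [add_assoc] using hstep _ ih
  exact hb (by simpa using hall (b - a).val)

theorem ZMod.two_ne_zero_of_three_le {r : ℕ} (hr : 3 ≤ r) : (2 : ZMod r) ≠ 0 := by
  intro h
  have hdvd := (ZMod.natCast_eq_zero_iff 2 r).1 (by exact_mod_cast h)
  have := Nat.le_of_dvd two_pos hdvd
  omega

section

variable {r s : ℕ}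

theorem lexCycle_adj_iff {v w : ZMod r × Fin s} :
    (lexCycle r s).Adj v w ↔ v ≠ w ∧ (w.1 = v.1 - 1 ∨ w.1 = v.1 ∨ w.1 = v.1 + 1) := by
  rw [lexCycle, SimpleGraph.fromRel_adj, and_congr_right_iff]
  intro _
  constructor
  · rintro ((h | h) | (h | h))
    · exact Or.inr (Or.inl h.symm)
    · exact Or.inl (eq_sub_of_add_eq h.symm)
    · exact Or.inr (Or.inl h)
    · exact Or.inr (Or.inr h)
  · rintro (h | h | h)
    · exact Or.inl (Or.inr (by rw [h, sub_add_cancel]))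
    · exact Or.inr (Or.inl h)
    · exact Or.inr (Or.inr h)

theorem lexCycle_isClique_of_subset_two_blocks {S : Set (ZMod r × Fin s)} {i : ZMod r}
    (hS : S ⊆ {v | v.1 = i ∨ v.1 = i + 1}) : (lexCycle r s).IsClique S := by
  intro v hv w hw hne
  rw [lexCycle_adj_iff]
  refine ⟨hne, ?_⟩
  rcases hS hv with hv | hv <;> rcases hS hw with hw | hw <;> rw [hv, hw] <;> simp

-- The paper's `xᵢ = |V(H) ∩ Bᵢ|`.
noncomputable def blockSize (S : Set (ZMod r × Fin s)) (i : ZMod r) : ℕ :=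
  (S ∩ {v | v.1 = i}).ncard

variable [NeZero r] {S : Set (ZMod r × Fin s)}

theorem blockSize_eq_zero_iff {i : ZMod r} : blockSize S i = 0 ↔ ∀ v ∈ S, v.1 ≠ i := by
  rw [blockSize, Set.ncard_eq_zero, Set.eq_empty_iff_forall_notMem]
  exact ⟨fun h v hv hvi => h v ⟨hv, hvi⟩, fun h v hv => h v hv.1 hv.2⟩

theorem blockSize_pos_iff {i : ZMod r} : 0 < blockSize S i ↔ ∃ v ∈ S, v.1 = i := by
  rw [blockSize, Set.ncard_pos]
  rfl

theorem ncard_inter_three_blocks {a b c : ZMod r} (hab : a ≠ b) (hac : a ≠ c) (hbc : b ≠ c) :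
    (S ∩ {v | v.1 = a ∨ v.1 = b ∨ v.1 = c}).ncard =
      blockSize S a + blockSize S b + blockSize S c := by
  simp only [Set.ofPred_or, Set.inter_union_distrib_left, blockSize]
  rw [Set.ncard_union_eq, Set.ncard_union_eq, add_assoc]
  · exact Set.disjoint_left.2 fun v hb hc => hbc (hb.2.symm.trans hc.2)
  · refine Set.disjoint_union_right.2 ⟨?_, ?_⟩ <;>
      exact Set.disjoint_left.2 fun v ha hb => by simp_all

theorem ncard_lexCycle_neighbors_add_one (h2 : (2 : ZMod r) ≠ 0) {v : ZMod r × Fin s}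
    (hv : v ∈ S) :
    (S ∩ {w | (lexCycle r s).Adj v w}).ncard + 1 =
      blockSize S (v.1 - 1) + blockSize S v.1 + blockSize S (v.1 + 1) := by
  have h1 : (1 : ZMod r) ≠ 0 := fun h => h2 (by rw [← one_add_one_eq_two, h, add_zero])
  have hinsert : insert v (S ∩ {w | (lexCycle r s).Adj v w}) =
      S ∩ {w | w.1 = v.1 - 1 ∨ w.1 = v.1 ∨ w.1 = v.1 + 1} := by
    ext w
    by_cases hw : w = v
    · simp [hw, hv]
    · simp [lexCycle_adj_iff, hw, Ne.symm hw]
  have hv_notMem : v ∉ S ∩ {w | (lexCycle r s).Adj v w} := fun h => (lexCycle r s).irrefl h.2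
  have hne₁ : v.1 - 1 ≠ v.1 := fun h => h1 (by linear_combination -h)
  have hne₂ : v.1 - 1 ≠ v.1 + 1 := fun h => h2 (by linear_combination -h)
  have hne₃ : v.1 ≠ v.1 + 1 := fun h => h1 (by linear_combination -h)
  rw [← Set.ncard_insert_of_notMem hv_notMem, hinsert,
    ncard_inter_three_blocks hne₁ hne₂ hne₃]

theorem blockSize_add_two_eq_zero_of_regular (h2 : (2 : ZMod r) ≠ 0) {d : ℕ}
    (hreg : ∀ v ∈ S, (S ∩ {w | (lexCycle r s).Adj v w}).ncard = d) {i : ZMod r}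
    (h₀ : blockSize S (i - 1) = 0) (h₁ : 0 < blockSize S i) (h₂ : 0 < blockSize S (i + 1)) :
    blockSize S (i + 2) = 0 := by
  obtain ⟨v, hv, rfl⟩ := blockSize_pos_iff.1 h₁
  obtain ⟨w, hw, hwv⟩ := blockSize_pos_iff.1 h₂
  have hdeg_v := ncard_lexCycle_neighbors_add_one h2 hv
  have hdeg_w := ncard_lexCycle_neighbors_add_one h2 hw
  rw [hreg v hv] at hdeg_v
  rw [hreg w hw, hwv, add_sub_cancel_right, add_assoc v.1, one_add_one_eq_two] at hdeg_w
  omega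

theorem subset_two_blocks_of_connected (hconn : ((lexCycle r s).induce S).Connected)
    {i : ZMod r} (h₀ : blockSize S (i - 1) = 0) (h₁ : 0 < blockSize S i)
    (h₂ : blockSize S (i + 1) = 0 ∨ blockSize S (i + 2) = 0) :
    S ⊆ {v | v.1 = i ∨ v.1 = i + 1} := by
  obtain ⟨u, hu, hui⟩ := blockSize_pos_iff.1 h₁
  refine hconn.subset_of_adj_mem hu (Or.inl hui) fun v hv w hw hvi hvw => ?_
  have hw_ne_prev : w.1 ≠ i - 1 := blockSize_eq_zero_iff.1 h₀ w hw
  rcases hvi with hvi | hvi <;> rcases (lexCycle_adj_iff.1 hvw).2 with hwv | hwv | hwv <;>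
    rw [hvi] at hwv
  · exact absurd hwv hw_ne_prev
  · exact Or.inl hwv
  · exact Or.inr hwv
  · exact Or.inl (by rw [hwv, add_sub_cancel_right])
  · exact Or.inr hwv
  · rw [add_assoc, one_add_one_eq_two] at hwv
    rcases h₂ with h₂ | h₂
    · exact absurd hvi (blockSize_eq_zero_iff.1 h₂ v hv)
    · exact absurd hwv (blockSize_eq_zero_iff.1 h₂ w hw)

end

theorem lexCycle_regular_missed_block_general (r s : ℕ) (hr : 4 ≤ r)
    (S : Set (ZMod r × Fin s))
    (hconn : ((lexCycle r s).induce S).Connected)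
    (hreg : ∃ d : ℕ, ∀ v ∈ S, (S ∩ {w | (lexCycle r s).Adj v w}).ncard = d)
    (hmiss : ∃ i : ZMod r, ∀ a : Fin s, ((i, a) : ZMod r × Fin s) ∉ S) :
    (lexCycle r s).IsClique S ∧
    ∃ i : ZMod r, S ⊆ {v | v.1 = i ∨ v.1 = i + 1} := by
  have : NeZero r := ⟨by omega⟩
  have h2 := ZMod.two_ne_zero_of_three_le (r := r) (by omega)
  obtain ⟨d, hreg⟩ := hreg
  obtain ⟨i₀, hi₀⟩ := hmiss
  obtain ⟨⟨u, hu⟩⟩ := hconn.nonempty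
  have hi₀_empty : blockSize S i₀ = 0 :=
    blockSize_eq_zero_iff.2 fun v hv hvi => hi₀ v.2 (by rwa [← hvi])
  obtain ⟨i, hi_empty, hi_succ⟩ := ZMod.exists_and_not_add_one (P := (blockSize S · = 0))
    hi₀_empty (Nat.pos_iff_ne_zero.1 (blockSize_pos_iff.2 ⟨u, hu, rfl⟩))
  have h₀ : blockSize S (i + 1 - 1) = 0 := by rwa [add_sub_cancel_right]
  have h₁ : 0 < blockSize S (i + 1) := Nat.pos_of_ne_zero hi_succ
  have hS : S ⊆ {v | v.1 = i + 1 ∨ v.1 = i + 1 + 1} := by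
    refine subset_two_blocks_of_connected hconn h₀ h₁ ?_
    by_cases h₂ : blockSize S (i + 1 + 1) = 0
    · exact Or.inl h₂
    · exact Or.inr <|
        blockSize_add_two_eq_zero_of_regular h2 hreg h₀ h₁ (Nat.pos_of_ne_zero h₂)
  exact ⟨lexCycle_isClique_of_subset_two_blocks hS, i + 1, hS⟩

theorem lexCycle_regular_missed_block (r s : ℕ) (hr : 4 ≤ r) (hs : 1 ≤ s)
    (S : Set (ZMod r × Fin s))
    (hconn : ((lexCycle r s).induce S).Connected)
    (hreg : ∃ d : ℕ, ∀ v ∈ S, (S ∩ {w | (lexCycle r s).Adj v w}).ncard = d)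
    (hmiss : ∃ i : ZMod r, ∀ a : Fin s, ((i, a) : ZMod r × Fin s) ∉ S) :
    (lexCycle r s).IsClique S ∧
    ∃ i : ZMod r, S ⊆ {v | v.1 = i ∨ v.1 = i + 1} :=
  lexCycle_regular_missed_block_general r s hr S hconn hreg hmiss
end

section
/- Let p be a prime with p ≡ 1 (mod 12), say p = 12t+1 with t ≥ 1. Then the disjoint union of 3t copies of the lexicographic product C₉[K_{6t}] has (9/8)(p-1)² vertices and contains no induced regular subgraph of order exactly p. -/
/-- The disjoint union of `n` copies of the graph `H`. -/
def copies (n : ℕ) {V : Type*} (H : SimpleGraph V) : SimpleGraph (Fin n × V) :=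
  SimpleGraph.fromRel (fun a b => a.1 = b.1 ∧ H.Adj a.2 b.2)

lemma copies_adj (n m : ℕ) (v w : Fin n × ZMod 9 × Fin m) :
    (copies n (lexCycle 9 m)).Adj v w ↔
      v ≠ w ∧ v.1 = w.1 ∧
        (v.2.1 = w.2.1 ∨ v.2.1 = w.2.1 + 1 ∨ w.2.1 = v.2.1 + 1) := by
  simp only [copies, lexCycle, SimpleGraph.fromRel_adj]
  constructor
  · rintro ⟨hne, ⟨h1, -, h2⟩ | ⟨h1, -, h2⟩⟩
    · exact ⟨hne, h1, by tauto⟩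
    · exact ⟨hne, h1.symm, by tauto⟩
  · rintro ⟨hne, h1, h2⟩
    have hv2 : v.2 ≠ w.2 := fun h => hne (Prod.ext h1 h)
    exact ⟨hne, Or.inl ⟨h1, hv2, by tauto⟩⟩

set_option maxHeartbeats 4000000 in
lemma per_raw (D m b0 b1 b2 b3 b4 b5 b6 b7 b8 : ℕ)
    (l0 : b0 ≤ m) (l1 : b1 ≤ m) (l2 : b2 ≤ m) (l3 : b3 ≤ m) (l4 : b4 ≤ m)
    (l5 : b5 ≤ m) (l6 : b6 ≤ m) (l7 : b7 ≤ m) (l8 : b8 ≤ m)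
    (h0 : 0 < b0 → b8 + b0 + b1 = D)
    (h1 : 0 < b1 → b0 + b1 + b2 = D)
    (h2 : 0 < b2 → b1 + b2 + b3 = D)
    (h3 : 0 < b3 → b2 + b3 + b4 = D)
    (h4 : 0 < b4 → b3 + b4 + b5 = D)
    (h5 : 0 < b5 → b4 + b5 + b6 = D)
    (h6 : 0 < b6 → b5 + b6 + b7 = D)
    (h7 : 0 < b7 → b6 + b7 + b8 = D)
    (h8 : 0 < b8 → b7 + b8 + b0 = D) :
    (b0+b1+b2+b3+b4+b5+b6+b7+b8 = 0) ∨
    (b0+b1+b2+b3+b4+b5+b6+b7+b8 = 3*D) ∨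
    ((b0+b1+b2+b3+b4+b5+b6+b7+b8 = D ∨ b0+b1+b2+b3+b4+b5+b6+b7+b8 = 2*D ∨
      b0+b1+b2+b3+b4+b5+b6+b7+b8 = 4*D) ∧ D ≤ 2*m) := by
  omega

lemma sum_zmod9 (B : ZMod 9 → ℕ) :
    ∑ i, B i = B 0 + B 1 + B 2 + B 3 + B 4 + B 5 + B 6 + B 7 + B 8 := by
  rw [show (Finset.univ : Finset (ZMod 9)) = {0,1,2,3,4,5,6,7,8} from by decide]
  rw [Finset.sum_insert (by decide), Finset.sum_insert (by decide),
    Finset.sum_insert (by decide), Finset.sum_insert (by decide),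
    Finset.sum_insert (by decide), Finset.sum_insert (by decide),
    Finset.sum_insert (by decide), Finset.sum_insert (by decide),
    Finset.sum_singleton]
  ring

lemma per (D m : ℕ) (B : ZMod 9 → ℕ) (hle : ∀ i, B i ≤ m)
    (h : ∀ i, 0 < B i → B (i - 1) + B i + B (i + 1) = D) :
    (∑ i, B i = 0) ∨ (∑ i, B i = 3 * D) ∨
    ((∑ i, B i = D ∨ ∑ i, B i = 2 * D ∨ ∑ i, B i = 4 * D) ∧ D ≤ 2 * m) := by
  have h0 := h 0; have h1 := h 1; have h2 := h 2; have h3 := h 3; have h4 := h 4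
  have h5 := h 5; have h6 := h 6; have h7 := h 7; have h8 := h 8
  simp only [show (0:ZMod 9) - 1 = 8 from by decide, show (1:ZMod 9) - 1 = 0 from by decide,
    show (2:ZMod 9) - 1 = 1 from by decide, show (3:ZMod 9) - 1 = 2 from by decide,
    show (4:ZMod 9) - 1 = 3 from by decide, show (5:ZMod 9) - 1 = 4 from by decide,
    show (6:ZMod 9) - 1 = 5 from by decide, show (7:ZMod 9) - 1 = 6 from by decide,
    show (8:ZMod 9) - 1 = 7 from by decide, show (0:ZMod 9) + 1 = 1 from by decide,
    show (1:ZMod 9) + 1 = 2 from by decide, show (2:ZMod 9) + 1 = 3 from by decide,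
    show (3:ZMod 9) + 1 = 4 from by decide, show (4:ZMod 9) + 1 = 5 from by decide,
    show (5:ZMod 9) + 1 = 6 from by decide, show (6:ZMod 9) + 1 = 7 from by decide,
    show (7:ZMod 9) + 1 = 8 from by decide, show (8:ZMod 9) + 1 = 0 from by decide]
    at h0 h1 h2 h3 h4 h5 h6 h7 h8
  rw [sum_zmod9]
  exact per_raw D m _ _ _ _ _ _ _ _ _ (hle 0) (hle 1) (hle 2) (hle 3) (hle 4)
    (hle 5) (hle 6) (hle 7) (hle 8) h0 h1 h2 h3 h4 h5 h6 h7 h8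

theorem case_p_eq_one_mod_twelve (p t : ℕ) (hp : p.Prime) (ht : 1 ≤ t)
    (hpt : p = 12 * t + 1) :
    8 * Fintype.card (Fin (3 * t) × ZMod 9 × Fin (6 * t)) = 9 * (p - 1)^2 ∧
    ¬ HasRegEq (copies (3 * t) (lexCycle 9 (6 * t))) p := by
  constructor
  · simp only [Fintype.card_prod, Fintype.card_fin, ZMod.card]
    have h1 : p - 1 = 12 * t := by omega
    rw [h1]; ring
  · rintro ⟨s, hcard, d, hreg⟩
    classical
    have hsf : s.Finite := Set.toFinite s
    set F : Finset (Fin (3*t) × ZMod 9 × Fin (6*t)) := hsf.toFinset with hFdef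
    set B : Fin (3*t) → ZMod 9 → ℕ :=
      fun c i => (F.filter fun v => v.1 = c ∧ v.2.1 = i).card with hBdef
    -- total count
    have htot : ∑ c : Fin (3*t), ∑ i : ZMod 9, B c i = p := by
      have hFc : F.card = p := by
        rw [hFdef, ← Set.ncard_eq_toFinset_card]; exact hcard
      rw [← hFc]
      rw [Finset.card_eq_sum_card_fiberwise
        (f := fun v : Fin (3*t) × ZMod 9 × Fin (6*t) => (v.1, v.2.1))
        (t := Finset.univ) (fun x _ => Finset.mem_univ _)]
      rw [← Finset.univ_product_univ, Finset.sum_product]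
      refine Finset.sum_congr rfl fun c _ => Finset.sum_congr rfl fun i _ => ?_
      simp only [hBdef]
      refine congrArg Finset.card ?_
      ext v
      simp [Prod.ext_iff]
    -- column bound
    have hbnd : ∀ c i, B c i ≤ 6 * t := by
      intro c i
      have hle : (F.filter fun v => v.1 = c ∧ v.2.1 = i).card
          ≤ (Finset.univ : Finset (Fin (6*t))).card := by
        apply Finset.card_le_card_of_injOn (fun v => v.2.2)
          (fun _ _ => Finset.mem_univ _)
        intro a ha b hb hab
        simp only [Finset.mem_coe, Finset.mem_filter] at ha hb
        exact Prod.ext (ha.2.1.trans hb.2.1.symm)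
          (Prod.ext (ha.2.2.trans hb.2.2.symm) hab)
      simpa using hle
    -- split of triple-column filter
    have hsplit : ∀ (c : Fin (3*t)) (i : ZMod 9),
        (F.filter fun w => w.1 = c ∧ (w.2.1 = i - 1 ∨ w.2.1 = i ∨ w.2.1 = i + 1)).card
          = B c (i-1) + B c i + B c (i+1) := by
      intro c i
      have d1 : (i:ZMod 9) - 1 ≠ i := by
        intro h; exact (by decide : (1:ZMod 9) ≠ 0) (by linear_combination -h)
      have d2 : (i:ZMod 9) - 1 ≠ i + 1 := by
        intro h; exact (by decide : (2:ZMod 9) ≠ 0) (by linear_combination -h)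
      have d3 : (i:ZMod 9) ≠ i + 1 := by
        intro h; exact (by decide : (1:ZMod 9) ≠ 0) (by linear_combination -h)
      have hunion : (F.filter fun w => w.1 = c ∧ (w.2.1 = i - 1 ∨ w.2.1 = i ∨ w.2.1 = i + 1))
          = (F.filter fun w => w.1 = c ∧ w.2.1 = i - 1) ∪
              ((F.filter fun w => w.1 = c ∧ w.2.1 = i) ∪
                (F.filter fun w => w.1 = c ∧ w.2.1 = i + 1)) := by
        ext w
        simp only [Finset.mem_filter, Finset.mem_union]
        tauto
      have hd2' : Disjoint (F.filter fun w => w.1 = c ∧ w.2.1 = i)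
          (F.filter fun w => w.1 = c ∧ w.2.1 = i + 1) := by
        rw [Finset.disjoint_left]
        intro a ha hb
        simp only [Finset.mem_filter] at ha hb
        exact d3 (ha.2.2.symm.trans hb.2.2)
      have hd1' : Disjoint (F.filter fun w => w.1 = c ∧ w.2.1 = i - 1)
          ((F.filter fun w => w.1 = c ∧ w.2.1 = i) ∪
            (F.filter fun w => w.1 = c ∧ w.2.1 = i + 1)) := by
        rw [Finset.disjoint_left]
        intro a ha hb
        simp only [Finset.mem_filter, Finset.mem_union] at ha hb
        rcases hb with hb | hb
        · exact d1 (ha.2.2.symm.trans hb.2.2)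
        · exact d2 (ha.2.2.symm.trans hb.2.2)
      rw [hunion, Finset.card_union_of_disjoint hd1', Finset.card_union_of_disjoint hd2']
      simp only [hBdef]
      ring
    -- regularity in column form
    have hcol : ∀ (c : Fin (3*t)) (i : ZMod 9), 0 < B c i →
        B c (i-1) + B c i + B c (i+1) = d + 1 := by
      intro c i hpos
      obtain ⟨v, hv⟩ := Finset.card_pos.mp hpos
      simp only [Finset.mem_filter] at hv
      obtain ⟨hvF, hv1, hv2⟩ := hv
      have hvs : v ∈ s := hsf.mem_toFinset.mp hvF
      have hdeg := hreg v hvs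
      have hset : s ∩ {w | (copies (3*t) (lexCycle 9 (6*t))).Adj v w}
          = ↑(F.filter fun w => (copies (3*t) (lexCycle 9 (6*t))).Adj v w) := by
        ext w
        simp only [Set.mem_inter_iff, Finset.coe_filter, Set.mem_setOf_eq, hFdef,
          Set.Finite.mem_toFinset]
      rw [hset, Set.ncard_coe_finset] at hdeg
      have hT : (F.filter fun w => (copies (3*t) (lexCycle 9 (6*t))).Adj v w)
          = (F.filter fun w => w.1 = c ∧ (w.2.1 = i - 1 ∨ w.2.1 = i ∨ w.2.1 = i + 1)).erase v := by
        ext w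
        simp only [Finset.mem_filter, Finset.mem_erase, copies_adj]
        constructor
        · rintro ⟨hwF, hne, h1, h2⟩
          refine ⟨fun h => hne (h ▸ rfl), hwF, hv1 ▸ h1.symm, ?_⟩
          rcases h2 with h | h | h
          · exact Or.inr (Or.inl (h.symm.trans hv2))
          · exact Or.inl (eq_sub_iff_add_eq.mpr (h.symm.trans hv2))
          · exact Or.inr (Or.inr (h.trans (by rw [hv2])))
        · rintro ⟨hne, hwF, h1, h2⟩
          refine ⟨hwF, fun h => hne h.symm, hv1.trans h1.symm, ?_⟩
          rcases h2 with h | h | h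
          · refine Or.inr (Or.inl ?_)
            rw [hv2, h, sub_add_cancel]
          · exact Or.inl (hv2.trans h.symm)
          · exact Or.inr (Or.inr (h.trans (by rw [hv2])))
      have hvT : v ∈ F.filter fun w =>
          w.1 = c ∧ (w.2.1 = i - 1 ∨ w.2.1 = i ∨ w.2.1 = i + 1) := by
        simp only [Finset.mem_filter]
        exact ⟨hvF, hv1, Or.inr (Or.inl hv2)⟩
      rw [hT, Finset.card_erase_of_mem hvT, hsplit c i] at hdeg
      have hge : 0 < B c (i-1) + B c i + B c (i+1) := by
        have := hsplit c i
        have : 0 < (F.filter fun w => w.1 = c ∧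
            (w.2.1 = i - 1 ∨ w.2.1 = i ∨ w.2.1 = i + 1)).card :=
          Finset.card_pos.mpr ⟨v, hvT⟩
        omega
      omega
    -- apply per-copy lemma
    have hper := fun c : Fin (3*t) => per (d+1) (6*t) (B c) (hbnd c) (hcol c)
    have hdvd : (d+1) ∣ p := by
      rw [← htot]
      apply Finset.dvd_sum
      intro c _
      rcases hper c with h | h | ⟨h, _⟩
      · rw [h]; exact dvd_zero _
      · rw [h]; exact dvd_mul_left _ 3
      · rcases h with h | h | h
        · rw [h]
        · rw [h]; exact dvd_mul_left _ 2
        · rw [h]; exact dvd_mul_left _ 4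
    rcases hp.eq_one_or_self_of_dvd _ hdvd with hD | hD
    · -- d = 0 : independent set, at most 12t vertices
      have hle4 : ∀ c : Fin (3*t), ∑ i, B c i ≤ 4 := by
        intro c
        rcases hper c with h | h | ⟨h, _⟩ <;> omega
      have : p ≤ 3 * t * 4 := by
        rw [← htot]
        calc ∑ c : Fin (3*t), ∑ i, B c i ≤ ∑ _c : Fin (3*t), 4 :=
              Finset.sum_le_sum fun c _ => hle4 c
          _ = 3 * t * 4 := by simp [Finset.sum_const, mul_comm]
      omega
    · -- d + 1 = p
      have hc0 : ∀ c : Fin (3*t), ∑ i, B c i = 0 ∨ ∑ i, B c i = 3 * p := by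
        intro c
        rcases hper c with h | h | ⟨_, hle2⟩
        · exact Or.inl h
        · exact Or.inr (by rw [h, hD])
        · omega
      by_cases hall : ∀ c : Fin (3*t), ∑ i, B c i = 0
      · have : (∑ c : Fin (3*t), ∑ i, B c i) = 0 :=
          Finset.sum_eq_zero fun c _ => hall c
        omega
      · push_neg at hall
        obtain ⟨c0, hne0⟩ := hall
        have h3 : ∑ i, B c0 i = 3 * p := (hc0 c0).resolve_left hne0
        have hle : 3 * p ≤ p := by
          conv_rhs => rw [← htot]
          rw [← h3]
          exact Finset.single_le_sum (f := fun c => ∑ i, B c i) (fun c _ => Nat.zero_le _) (Finset.mem_univ c0)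
        omega
end

section
/- Let q < p be primes. Then N_=(qp) ≥ p² + 2q²p − 4qp + 2 + (p−1)·min{q−1, p−q}, i.e. there exists a graph on p² + 2q²p − 4qp + 1 + (p−1)·min{q−1, p−q} vertices with no induced regular subgraph of order exactly qp. -/
open Finset SimpleGraph

namespace SimpleGraph

variable {V : Type*} (G : SimpleGraph V)

theorem exists_isNClique_or_isNClique_compl [DecidableEq V] :
    ∀ (s t : ℕ) (W : Finset V), 2 ^ (s + t) ≤ #W →
      (∃ A ⊆ W, G.IsNClique s A) ∨ ∃ B ⊆ W, Gᶜ.IsNClique t B := by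
  intro s t
  induction h : s + t generalizing s t with
  | zero => exact fun W _ => .inl ⟨∅, empty_subset W, by simp [show s = 0 by omega]⟩
  | succ n ih =>
    intro W hW
    match s, t with
    | 0, _ => exact .inl ⟨∅, empty_subset W, by simp⟩
    | _, 0 => exact .inr ⟨∅, empty_subset W, by simp⟩
    | s + 1, t + 1 =>
      classical
      obtain ⟨v, hv⟩ : W.Nonempty := card_pos.mp (lt_of_lt_of_le (Nat.two_pow_pos _) hW)
      set N := (W.erase v).filter (G.Adj v)
      set M := (W.erase v).filter (Gᶜ.Adj v)
      have hNW : N ⊆ W := (filter_subset _ _).trans (erase_subset v W)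
      have hMW : M ⊆ W := (filter_subset _ _).trans (erase_subset v W)
      have hNM : #N + #M = #W - 1 := by
        rw [← card_erase_of_mem hv, ← card_union_of_disjoint]
        · congr 1
          ext w
          simp only [N, M, mem_union, mem_filter, mem_erase, compl_adj]
          tauto
        · exact disjoint_filter.mpr fun w _ hG hGc => (compl_adj G v w).mp hGc |>.2 hG
      have hpow : 2 ^ (s + 1 + (t + 1)) = 2 ^ n + 2 ^ n := by rw [h]; ring
      by_cases hN : 2 ^ n ≤ #N
      · rcases ih s (t + 1) (by omega) N hN with ⟨A, hAN, hA⟩ | ⟨B, hBN, hB⟩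
        · refine .inl ⟨insert v A, insert_subset hv (hAN.trans hNW), hA.insert fun b hb => ?_⟩
          exact (mem_filter.mp (hAN hb)).2
        · exact .inr ⟨B, hBN.trans hNW, hB⟩
      · rcases ih (s + 1) t (by omega) M (by omega) with ⟨A, hAM, hA⟩ | ⟨B, hBM, hB⟩
        · exact .inl ⟨A, hAM.trans hMW, hA⟩
        · refine .inr ⟨insert v B, insert_subset hv (hBM.trans hMW), hB.insert fun b hb => ?_⟩
          exact (mem_filter.mp (hBM hb)).2

end SimpleGraph

theorem SimpleGraph.IsClique.regOn {V : Type*} {G : SimpleGraph V} {s : Set V} (h : G.IsClique s) :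
    RegOn G s := by
  refine ⟨s.ncard - 1, fun v hv => ?_⟩
  have : s ∩ {w | G.Adj v w} = s \ {v} := by
    ext w
    simp only [Set.mem_inter_iff, Set.mem_ofPred_eq, Set.mem_sdiff, Set.mem_singleton_iff]
    exact ⟨fun ⟨hw, hvw⟩ => ⟨hw, hvw.ne'⟩, fun ⟨hw, hwv⟩ => ⟨hw, h hv hw (Ne.symm hwv)⟩⟩
  rw [this, Set.ncard_sdiff_singleton_of_mem hv]

theorem SimpleGraph.IsIndepSet.regOn {V : Type*} {G : SimpleGraph V} {s : Set V}
    (h : G.IsIndepSet s) : RegOn G s := by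
  refine ⟨0, fun v hv => ?_⟩
  have : s ∩ {w | G.Adj v w} = ∅ :=
    Set.eq_empty_of_forall_notMem fun w ⟨hw, hvw⟩ => h hv hw hvw.ne hvw
  rw [this, Set.ncard_empty]

theorem exists_forall_hasRegEq (k : ℕ) : ∃ n, ∀ G : SimpleGraph (Fin n), HasRegEq G k := by
  refine ⟨2 ^ (k + k), fun G => ?_⟩
  rcases G.exists_isNClique_or_isNClique_compl k k Finset.univ (by simp) with
    ⟨A, -, hA⟩ | ⟨B, -, hB⟩
  · exact ⟨A, by simp [hA.card_eq], hA.isClique.regOn⟩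
  · exact ⟨B, by simp [hB.card_eq], (by simpa using hB.isClique : G.IsIndepSet _).regOn⟩

theorem HasRegEq.of_comap {V W : Type*} {G : SimpleGraph W} {k : ℕ} (f : V ↪ W)
    (h : HasRegEq (G.comap f) k) : HasRegEq G k := by
  obtain ⟨s, hcard, d, hd⟩ := h
  refine ⟨f '' s, by rwa [Set.ncard_image_of_injective _ f.injective], d, ?_⟩
  rintro _ ⟨v, hv, rfl⟩
  rw [← hd v hv, ← Set.ncard_image_of_injective _ f.injective]
  exact congrArg Set.ncard (Set.image_inter_preimage f s _).symm

theorem lt_Neq_of_not_hasRegEq {N k : ℕ} (G : SimpleGraph (Fin N)) (hG : ¬ HasRegEq G k) :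
    N < Neq k := by
  refine lt_of_lt_of_le (Nat.lt_succ_self N) (le_csInf (exists_forall_hasRegEq k) ?_)
  intro m hm
  by_contra! hmN
  exact hG (.of_comap (Fin.castLEEmb (Nat.lt_succ_iff.mp hmN)) (hm _))

theorem Set.ncard_inter_preimage_eq_sum {α β : Type*} [Finite α] [DecidableEq β] (s : Set α)
    (f : α → β) (T : Finset β) : (s ∩ f ⁻¹' T).ncard = ∑ b ∈ T, (s ∩ f ⁻¹' {b}).ncard := by
  induction T using Finset.induction_on with
  | empty => simp
  | insert a T ha ih =>
    rw [sum_insert ha, ← ih, coe_insert, Set.insert_eq, Set.preimage_union,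
      Set.inter_union_distrib_left, Set.ncard_union_eq]
    exact (Set.disjoint_singleton_left.mpr (by simpa using ha)).preimage f |>.inter_left' s
      |>.inter_right' s

namespace SimpleGraph

variable {ι : Type*}

def cliqueBlowup (H : SimpleGraph ι) (w : ι → ℕ) : SimpleGraph (Σ b, Fin (w b)) where
  Adj u v := u ≠ v ∧ (u.1 = v.1 ∨ H.Adj u.1 v.1)
  symm := ⟨fun _ _ h => ⟨h.1.symm, h.2.imp Eq.symm H.adj_symm⟩⟩
  loopless := ⟨fun _ h => h.1 rfl⟩

theorem ncard_inter_cliqueBlowup_adj_add_one [Finite ι] (H : SimpleGraph ι) (w : ι → ℕ)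
    {s : Set (Σ b, Fin (w b))} {v : Σ b, Fin (w b)} (hv : v ∈ s) :
    (s ∩ {u | (H.cliqueBlowup w).Adj v u}).ncard + 1 =
      (s ∩ Sigma.fst ⁻¹' {b | b = v.1 ∨ H.Adj v.1 b}).ncard := by
  have : s ∩ Sigma.fst ⁻¹' {b | b = v.1 ∨ H.Adj v.1 b} =
      insert v (s ∩ {u | (H.cliqueBlowup w).Adj v u}) := by
    ext u
    by_cases huv : u = v
    · simp [huv, hv]
    · simp [cliqueBlowup, huv, Ne.symm huv, eq_comm]
  rw [this, Set.ncard_insert_of_notMem fun h => h.2.1 rfl]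

instance (n : ℕ) : DecidableRel (pathGraph n).Adj :=
  fun _ _ => decidable_of_iff _ pathGraph_adj.symm

variable {κ α : Type*} [Fintype κ] [Fintype α] [DecidableEq κ] [DecidableEq α]
  (F : SimpleGraph α) [DecidableRel F.Adj] (w : κ → α → ℕ)

theorem sum_closedNbhd_eq_of_regOn {s : Set (Σ b : κ × α, Fin (w b.1 b.2))} {d : ℕ}
    (hreg : ∀ v ∈ s, (s ∩ {u | (((⊥ : SimpleGraph κ) □ F).cliqueBlowup _).Adj v u}).ncard = d)
    {i : κ} {j : α} (hij : (s ∩ Sigma.fst ⁻¹' {(i, j)}).Nonempty) :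
    ∑ j' ∈ univ.filter (fun j' => j' = j ∨ F.Adj j j'),
      (s ∩ Sigma.fst ⁻¹' {(i, j')}).ncard = d + 1 := by
  obtain ⟨v, hvs, hv : v.1 = (i, j)⟩ := hij
  have hN : {b | b = v.1 ∨ ((⊥ : SimpleGraph κ) □ F).Adj v.1 b} =
      ((univ.filter fun j' => j' = j ∨ F.Adj j j').image (Prod.mk i) :) := by
    ext ⟨i', j'⟩
    simp [hv, boxProd_adj, eq_comm]
  rw [← hreg v hvs, ncard_inter_cliqueBlowup_adj_add_one _ _ hvs, hN,
    Set.ncard_inter_preimage_eq_sum, sum_image fun _ _ _ _ h => (Prod.mk.inj h).2]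

end SimpleGraph

/-- The largest number of disjoint, pairwise non-adjacent `m`-cliques in the clique blow-up of
the path `0 - 1 - 2 - 3` with part sizes `w`: one clique inside two consecutive parts, or two,
in parts `0, 1` and in part `3`, or in part `0` and in parts `2, 3`. -/
def pathFourPacking (w : Fin 4 → ℕ) (m : ℕ) : ℕ :=
  if (m ≤ w 0 + w 1 ∧ m ≤ w 3) ∨ (m ≤ w 0 ∧ m ≤ w 2 + w 3) then 2
  else if m ≤ w 0 + w 1 ∨ m ≤ w 1 + w 2 ∨ m ≤ w 2 + w 3 then 1 else 0

theorem pathFourPacking_le_two (w : Fin 4 → ℕ) (m : ℕ) : pathFourPacking w m ≤ 2 := by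
  unfold pathFourPacking
  split_ifs <;> omega

theorem pathFourPacking_le_one {a b c d m : ℕ} (hd : d < m) (hacd : a < m ∨ c + d < m) :
    pathFourPacking ![a, b, c, d] m ≤ 1 := by
  rw [pathFourPacking, if_neg (by simp; omega)]
  split_ifs <;> omega

theorem pathFourPacking_eq_zero {a b c d m : ℕ} (hab : a + b < m) (hbc : b + c < m)
    (hcd : c + d < m) : pathFourPacking ![a, b, c, d] m = 0 := by
  rw [pathFourPacking, if_neg (by simp; omega), if_neg (by simp; omega)]

theorem exists_sum_eq_mul_pathFourPacking {n w : Fin 4 → ℕ} {m : ℕ} (hnw : ∀ j, n j ≤ w j)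
    (hclosed : ∀ j, 0 < n j →
      ∑ j' ∈ univ.filter (fun j' => j' = j ∨ (pathGraph 4).Adj j j'), n j' = m) :
    ∃ k ≤ pathFourPacking w m, ∑ j, n j = k * m := by
  have hD : 0 < n 0 → n 0 + n 1 = m := by
    simpa [sum_filter, Fin.sum_univ_four, pathGraph_adj] using hclosed 0
  have hC : 0 < n 1 → n 0 + n 1 + n 2 = m := by
    simpa [sum_filter, Fin.sum_univ_four, pathGraph_adj] using hclosed 1
  have hX : 0 < n 2 → n 1 + n 2 + n 3 = m := by
    simpa [sum_filter, Fin.sum_univ_four, pathGraph_adj] using hclosed 2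
  have hA : 0 < n 3 → n 2 + n 3 = m := by
    simpa [sum_filter, Fin.sum_univ_four, pathGraph_adj] using hclosed 3
  have := hnw 0
  have := hnw 1
  have := hnw 2
  have := hnw 3
  rw [Fin.sum_univ_four, pathFourPacking]
  -- `s` meets the component in no clique, in one, or in two non-adjacent ones
  have : n 0 + n 1 + n 2 + n 3 = 0 ∨
      n 0 + n 1 + n 2 + n 3 = m ∧ (m ≤ w 0 + w 1 ∨ m ≤ w 1 + w 2 ∨ m ≤ w 2 + w 3) ∨
      n 0 + n 1 + n 2 + n 3 = 2 * m ∧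
        ((m ≤ w 0 + w 1 ∧ m ≤ w 3) ∨ (m ≤ w 0 ∧ m ≤ w 2 + w 3)) := by
    omega
  rcases this with h | ⟨h, hc⟩ | ⟨h, hc⟩
  · exact ⟨0, Nat.zero_le _, by omega⟩
  · exact ⟨1, by split_ifs <;> omega, by omega⟩
  · exact ⟨2, by rw [if_pos hc], by omega⟩

section PathFourBlowup

variable {κ : Type*} [Fintype κ] [DecidableEq κ]

abbrev pathFourBlowup (w : κ → Fin 4 → ℕ) : SimpleGraph (Σ b : κ × Fin 4, Fin (w b.1 b.2)) :=
  ((⊥ : SimpleGraph κ) □ pathGraph 4).cliqueBlowup fun b => w b.1 b.2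

theorem RegOn.exists_ncard_eq_mul {w : κ → Fin 4 → ℕ} {s : Set (Σ b : κ × Fin 4, Fin (w b.1 b.2))}
    (h : RegOn (pathFourBlowup w) s) :
    ∃ m K, 0 < m ∧ K ≤ ∑ i, pathFourPacking (w i) m ∧ s.ncard = K * m := by
  obtain ⟨d, hd⟩ := h
  have hfiber (b : κ × Fin 4) : (s ∩ Sigma.fst ⁻¹' {b}).ncard ≤ w b.1 b.2 := by
    refine (Set.ncard_le_ncard Set.inter_subset_right).trans_eq ?_
    rw [← Set.range_sigmaMk, Set.ncard_range_of_injective sigma_mk_injective, Nat.card_eq_fintype_card,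
      Fintype.card_fin]
  have hcomp (i : κ) : ∃ k ≤ pathFourPacking (w i) (d + 1),
      ∑ j, (s ∩ Sigma.fst ⁻¹' {(i, j)}).ncard = k * (d + 1) :=
    exists_sum_eq_mul_pathFourPacking (fun j => hfiber (i, j)) fun j hj =>
      SimpleGraph.sum_closedNbhd_eq_of_regOn _ _ hd (Set.nonempty_of_ncard_ne_zero hj.ne')
  choose k hk hks using hcomp
  refine ⟨d + 1, ∑ i, k i, d.succ_pos, sum_le_sum fun i _ => hk i, ?_⟩
  rw [sum_mul, ← sum_congr rfl fun i _ => hks i, ← Fintype.sum_prod_type',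
    ← Set.ncard_inter_preimage_eq_sum]
  simp

end PathFourBlowup

theorem Nat.eq_one_or_self_or_self_or_mul_of_dvd_mul {q p m : ℕ} (hq : q.Prime) (hp : p.Prime)
    (hm : m ∣ q * p) : m = 1 ∨ m = q ∨ m = p ∨ m = q * p := by
  have := Nat.mem_divisors.mpr ⟨hm, (Nat.mul_pos hq.pos hp.pos).ne'⟩
  rw [Nat.divisors_mul, hq.divisors, hp.divisors] at this
  simp only [mem_mul, mem_insert, mem_singleton, exists_eq_or_imp, mul_one, ↓existsAndEq,
    true_and, one_mul] at this
  omega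

section Witness

variable (q p : ℕ)

/-- Row `r` lists the part sizes `(Dᵢ, Cᵢ, Xᵢ, Aᵢ)` of the components of kind `r`: the
`Bᵢ = Cᵢ ∪ Dᵢ` joined through `Xᵢ` to `Aᵢ` for `i ≤ t`, the other `Bᵢ`, the other `Aᵢ`, and
the `Yᵢ`. -/
def componentShape : Fin 4 → Fin 4 → ℕ :=
  ![![p - 1, q * p - p, p - 1, p - 1], ![p - 1, q * p - p, 0, 0], ![p - 1, 0, 0, 0],
    ![q - 1, 0, 0, 0]]

def componentCount : Fin 4 → ℕ :=
  ![min (q - 1) (p - q), q - 1 - min (q - 1) (p - q), p - q - min (q - 1) (p - q), q * p - p]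

abbrev Component : Type := Σ r : Fin 4, Fin (componentCount q p r)

abbrev witnessGraph :
    SimpleGraph (Σ b : Component q p × Fin 4, Fin (componentShape q p b.1.1 b.2)) :=
  pathFourBlowup fun i : Component q p => componentShape q p i.1

variable {q p}

theorem card_witnessGraph_vertices (hq : 2 ≤ q) (hqp : q < p) :
    Fintype.card (Σ b : Component q p × Fin 4, Fin (componentShape q p b.1.1 b.2)) =
      p ^ 2 + 2 * q ^ 2 * p - 4 * q * p + 1 + (p - 1) * min (q - 1) (p - q) := by
  simp only [Fintype.card_sigma, Fintype.sum_prod_type, Fintype.sum_sigma, sum_const, card_univ,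
    Fintype.card_fin, smul_eq_mul, Fin.sum_univ_four]
  simp only [componentShape, componentCount, Fin.isValue, Matrix.cons_val_zero, Matrix.cons_val',
    Matrix.cons_val_fin_one, Matrix.cons_val_one, Matrix.cons_val, add_zero]
  have ht1 := min_le_left (q - 1) (p - q)
  have ht2 := min_le_right (q - 1) (p - q)
  generalize min (q - 1) (p - q) = t at *
  have hpqp : p ≤ q * p := Nat.le_mul_of_pos_left p (by omega)
  have h4 : 4 * q * p ≤ p ^ 2 + 2 * q ^ 2 * p := by nlinarith
  zify [hq.trans hqp.le, hqp.le, ht1, ht2, hpqp, h4, (by omega : 1 ≤ q), (by omega : 1 ≤ p)]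
  ring

theorem sum_pathFourPacking_componentShape (m : ℕ) :
    ∑ i : Component q p, pathFourPacking (componentShape q p i.1) m =
      min (q - 1) (p - q) * pathFourPacking ![p - 1, q * p - p, p - 1, p - 1] m
        + (q - 1 - min (q - 1) (p - q)) * pathFourPacking ![p - 1, q * p - p, 0, 0] m
        + (p - q - min (q - 1) (p - q)) * pathFourPacking ![p - 1, 0, 0, 0] m
        + (q * p - p) * pathFourPacking ![q - 1, 0, 0, 0] m := by
  simp only [Fintype.sum_sigma, sum_const, card_univ, Fintype.card_fin, smul_eq_mul,
    Fin.sum_univ_four]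
  simp [componentShape, componentCount]

theorem sum_pathFourPacking_lt_div (hq : q.Prime) (hp : p.Prime) (hqp : q < p) {m : ℕ}
    (hm : m ∣ q * p) :
    ∑ i : Component q p, pathFourPacking (componentShape q p i.1) m < q * p / m := by
  rw [sum_pathFourPacking_componentShape]
  set t := min (q - 1) (p - q)
  have hq2 := hq.two_le
  have hpqp : 2 * p ≤ q * p := Nat.mul_le_mul_right p hq2
  have ht1 : t ≤ q - 1 := min_le_left _ _
  have ht2 : t ≤ p - q := min_le_right _ _
  rcases Nat.eq_one_or_self_or_self_or_mul_of_dvd_mul hq hp hm with hm1 | hmq | hmp | hmqp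
  · subst m
    calc _ ≤ t * 2 + (q - 1 - t) * 1 + (p - q - t) * 1 + (q * p - p) * 1 := by
          gcongr
          · exact pathFourPacking_le_two _ _
          all_goals exact pathFourPacking_le_one (by omega) (by omega)
      _ < q * p / 1 := by omega
  · subst m
    calc _ ≤ t * 2 + (q - 1 - t) * 1 + (p - q - t) * 1 + (q * p - p) * 0 := by
          gcongr
          · exact pathFourPacking_le_two _ _
          · exact pathFourPacking_le_one (by omega) (by omega)
          · exact pathFourPacking_le_one (by omega) (by omega)
          · exact (pathFourPacking_eq_zero (by omega) (by omega) (by omega)).le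
      _ < q * p / q := by rw [Nat.mul_div_cancel_left _ hq.pos]; omega
  · subst m
    calc _ ≤ t * 1 + (q - 1 - t) * 1 + (p - q - t) * 0 + (q * p - p) * 0 := by
          gcongr
          · exact pathFourPacking_le_one (by omega) (by omega)
          · exact pathFourPacking_le_one (by omega) (by omega)
          · exact (pathFourPacking_eq_zero (by omega) (by omega) (by omega)).le
          · exact (pathFourPacking_eq_zero (by omega) (by omega) (by omega)).le
      _ < q * p / p := by rw [Nat.mul_div_cancel _ hp.pos]; omega
  · subst m
    rw [pathFourPacking_eq_zero, pathFourPacking_eq_zero, pathFourPacking_eq_zero,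
      pathFourPacking_eq_zero, Nat.div_self (Nat.mul_pos hq.pos hp.pos)]
    all_goals omega

end Witness

theorem not_hasRegEq_witnessGraph {q p : ℕ} (hq : q.Prime) (hp : p.Prime) (hqp : q < p) :
    ¬ HasRegEq (witnessGraph q p) (q * p) := by
  rintro ⟨s, hs, hreg⟩
  obtain ⟨m, K, hm, hK, hsK⟩ := hreg.exists_ncard_eq_mul
  have hlt := sum_pathFourPacking_lt_div hq hp hqp (Dvd.intro_left K (hs ▸ hsK).symm)
  rw [← hs, hsK, Nat.mul_div_cancel _ hm] at hlt
  omega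

theorem Neq_lower_bound_qp (q p : ℕ) (hq : q.Prime) (hp : p.Prime) (hqp : q < p) :
    (∃ G : SimpleGraph
        (Fin (p^2 + 2*q^2*p - 4*q*p + 1 + (p - 1) * min (q - 1) (p - q))),
      ¬ HasRegEq G (q * p)) ∧
    p^2 + 2*q^2*p - 4*q*p + 2 + (p - 1) * min (q - 1) (p - q) ≤ Neq (q * p) := by
  let e := (Fintype.equivFinOfCardEq (card_witnessGraph_vertices hq.two_le hqp)).symm
  have hG : ¬ HasRegEq ((witnessGraph q p).comap e.toEmbedding) (q * p) := fun h =>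
    not_hasRegEq_witnessGraph hq hp hqp (h.of_comap e.toEmbedding)
  have hNeq := lt_Neq_of_not_hasRegEq _ hG
  exact ⟨⟨_, hG⟩, by omega⟩
end

section
/- The function f(u,v) = log(v/u) + (u−v)/v − c₂(u−v)², with c₂ = 1/(2(1−α)²) and u fixed in [α, 1−α], attains its minimum over v ∈ [α, 1−α] at v = u, where it equals 0; indeed ∂f/∂v = (v−u)(1 − 2c₂v²)/v² has the same sign as v−u on this interval. -/
open Real Set

theorem isMinOn_of_hasDerivAt_of_sub_mul_deriv_nonneg {f f' : ℝ → ℝ} {s : Set ℝ}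
    [hs : s.OrdConnected] {u : ℝ} (hu : u ∈ s) (hf : ∀ x ∈ s, HasDerivAt f (f' x) x)
    (hsign : ∀ x ∈ s, 0 ≤ (x - u) * f' x) : IsMinOn f s u := by
  have hderiv {a b : ℝ} (ha : a ∈ s) (hb : b ∈ s) :
      ∀ x ∈ interior (Icc a b), HasDerivWithinAt f (f' x) (interior (Icc a b)) x :=
    fun x hx ↦ (hf x (hs.out ha hb (interior_subset hx))).hasDerivWithinAt
  have hcont {a b : ℝ} (ha : a ∈ s) (hb : b ∈ s) : ContinuousOn f (Icc a b) :=
    fun x hx ↦ (hf x (hs.out ha hb hx)).continuousAt.continuousWithinAt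
  intro v hv
  rcases le_total v u with hvu | huv
  · refine antitoneOn_of_hasDerivWithinAt_nonpos (convex_Icc v u) (hcont hv hu)
      (hderiv hv hu) (fun x hx ↦ ?_) ⟨le_rfl, hvu⟩ ⟨hvu, le_rfl⟩ hvu
    rw [interior_Icc] at hx
    exact nonpos_of_mul_nonneg_right (hsign x (hs.out hv hu (Ioo_subset_Icc_self hx)))
      (sub_neg.2 hx.2)
  · refine monotoneOn_of_hasDerivWithinAt_nonneg (convex_Icc u v) (hcont hu hv)
      (hderiv hu hv) (fun x hx ↦ ?_) ⟨le_rfl, huv⟩ ⟨huv, le_rfl⟩ huv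
    rw [interior_Icc] at hx
    exact nonneg_of_mul_nonneg_right (hsign x (hs.out hu hv (Ioo_subset_Icc_self hx)))
      (sub_pos.2 hx.1)

theorem hasDerivAt_log_div_add_sub_div_sub_mul_sq {u v : ℝ} (hu : u ≠ 0) (hv : v ≠ 0) (c : ℝ) :
    HasDerivAt (fun v : ℝ => log (v / u) + (u - v) / v - c * (u - v) ^ 2)
      ((v - u) * (1 - 2 * c * v ^ 2) / v ^ 2) v := by
  have hlog : HasDerivAt (fun v : ℝ => log (v / u)) (1 / u / (v / u)) v :=
    ((hasDerivAt_id v).div_const u).log (div_ne_zero hv hu)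
  have hfrac := ((hasDerivAt_const v u).sub (hasDerivAt_id v)).div (hasDerivAt_id v) hv
  have hsq := (((hasDerivAt_const v u).sub (hasDerivAt_id v)).pow 2).const_mul c
  refine ((hlog.add hfrac).sub hsq).congr_deriv ?_
  simp only [Pi.sub_apply, id_eq]
  field_simp
  ring

theorem two_mul_one_div_two_mul_sq_mul_sq_le_one {a v : ℝ} (hv0 : 0 ≤ v) (hva : v ≤ a) :
    2 * (1 / (2 * a ^ 2)) * v ^ 2 ≤ 1 := by
  rw [show 2 * (1 / (2 * a ^ 2)) * v ^ 2 = v ^ 2 / a ^ 2 by ring]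
  exact div_le_one_of_le₀ (pow_le_pow_left₀ hv0 hva 2) (sq_nonneg a)

theorem min_of_f_at_u_general (α u : ℝ) (hα0 : 0 < α)
    (hu : u ∈ Set.Icc α (1 - α)) :
    (fun v : ℝ => Real.log (v / u) + (u - v) / v
        - (1 / (2 * (1 - α)^2)) * (u - v)^2) u = 0 ∧
    (∀ v ∈ Set.Icc α (1 - α),
      (0:ℝ) ≤ Real.log (v / u) + (u - v) / v
        - (1 / (2 * (1 - α)^2)) * (u - v)^2) ∧
    (∀ v ∈ Set.Icc α (1 - α),
      HasDerivAt (fun v : ℝ => Real.log (v / u) + (u - v) / v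
          - (1 / (2 * (1 - α)^2)) * (u - v)^2)
        ((v - u) * (1 - 2 * (1 / (2 * (1 - α)^2)) * v^2) / v^2) v) := by
  have hpos {v : ℝ} (hv : v ∈ Icc α (1 - α)) : 0 < v := hα0.trans_le hv.1
  set c := 1 / (2 * (1 - α) ^ 2)
  set f := fun v : ℝ => log (v / u) + (u - v) / v - c * (u - v) ^ 2
  have hderiv (v : ℝ) (hv : v ∈ Icc α (1 - α)) :
      HasDerivAt f ((v - u) * (1 - 2 * c * v ^ 2) / v ^ 2) v :=
    hasDerivAt_log_div_add_sub_div_sub_mul_sq (hpos hu).ne' (hpos hv).ne' c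
  have hzero : f u = 0 := by simp [f, div_self (hpos hu).ne']
  have hmin : IsMinOn f (Icc α (1 - α)) u :=
    isMinOn_of_hasDerivAt_of_sub_mul_deriv_nonneg hu hderiv fun v hv ↦ by
      have hc := two_mul_one_div_two_mul_sq_mul_sq_le_one (hpos hv).le hv.2
      rw [show (v - u) * ((v - u) * (1 - 2 * c * v ^ 2) / v ^ 2)
        = (v - u) ^ 2 * (1 - 2 * c * v ^ 2) / v ^ 2 by ring]
      exact div_nonneg (mul_nonneg (sq_nonneg _) (sub_nonneg.2 hc)) (sq_nonneg _)
  exact ⟨hzero, fun v hv ↦ hzero ▸ hmin hv, hderiv⟩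

theorem min_of_f_at_u (α u : ℝ) (hα0 : 0 < α) (hα : α < 1/2)
    (hu : u ∈ Set.Icc α (1 - α)) :
    (fun v : ℝ => Real.log (v / u) + (u - v) / v
        - (1 / (2 * (1 - α)^2)) * (u - v)^2) u = 0 ∧
    (∀ v ∈ Set.Icc α (1 - α),
      (0:ℝ) ≤ Real.log (v / u) + (u - v) / v
        - (1 / (2 * (1 - α)^2)) * (u - v)^2) ∧
    (∀ v ∈ Set.Icc α (1 - α),
      HasDerivAt (fun v : ℝ => Real.log (v / u) + (u - v) / v
          - (1 / (2 * (1 - α)^2)) * (u - v)^2)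
        ((v - u) * (1 - 2 * (1 / (2 * (1 - α)^2)) * v^2) / v^2) v) :=
  min_of_f_at_u_general α u hα0 hu
end
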